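/- Let Γ be an artin algebra, 0 → A → B → C → 0 a short exact sequence in Γ-mod, and X a resolving subcategory of Γ-mod. If f: X → A and h: Z → C are right minimal X-approximations, then there exists a right X-approximation g: Y → B fitting into a commutative diagram with exact rows 0 → X → Y → Z → 0 over 0 → A → B → C → 0. -/

import Mathlib

open CategoryTheory Limits Opposite

/-- The Ext group `Ext^n(X, Y)` in the category of `Γ`-modules. -/
noncomputable abbrev extGrp (Γ : Type) [Ring Γ] (n : ℕ) (X Y : ModuleCat Γ) : ModuleCat ℤ :=
  ((Ext ℤ (ModuleCat Γ) n).obj (op X)).obj Y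

/-- The class of finitely generated `Γ`-modules. -/
def fgMod (Γ : Type) [Ring Γ] : Set (ModuleCat Γ) := {M | Module.Finite Γ M}

/-- A resolving subcategory of the category of finitely generated `Γ`-modules:
it consists of finitely generated modules, is closed under isomorphisms, contains all
(finitely generated) projective modules, and is closed under extensions, direct summands
and kernels of epimorphisms. -/
structure IsResolving (Γ : Type) [Ring Γ] (𝒳 : Set (ModuleCat Γ)) : Prop where
  subset_fg : 𝒳 ⊆ fgMod Γ
  iso_closed : ∀ M N : ModuleCat Γ, Nonempty (M ≅ N) → M ∈ 𝒳 → N ∈ 𝒳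
  proj_mem : ∀ M : ModuleCat Γ, M ∈ fgMod Γ → Projective M → M ∈ 𝒳
  ext_closed : ∀ S : ShortComplex (ModuleCat Γ), S.ShortExact →
    S.X₁ ∈ 𝒳 → S.X₃ ∈ 𝒳 → S.X₂ ∈ 𝒳
  summand_closed : ∀ M N : ModuleCat Γ, (M ⊞ N) ∈ 𝒳 → M ∈ 𝒳
  ker_epi_closed : ∀ S : ShortComplex (ModuleCat Γ), S.ShortExact →
    S.X₂ ∈ 𝒳 → S.X₃ ∈ 𝒳 → S.X₁ ∈ 𝒳

/-- A coresolving subcategory: consists of finitely generated modules, closed under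
isomorphisms, contains all (finitely generated) injective modules, and is closed under
extensions, direct summands and cokernels of monomorphisms. -/
structure IsCoresolving (Γ : Type) [Ring Γ] (𝒴 : Set (ModuleCat Γ)) : Prop where
  subset_fg : 𝒴 ⊆ fgMod Γ
  iso_closed : ∀ M N : ModuleCat Γ, Nonempty (M ≅ N) → M ∈ 𝒴 → N ∈ 𝒴
  inj_mem : ∀ M : ModuleCat Γ, M ∈ fgMod Γ → Injective M → M ∈ 𝒴
  ext_closed : ∀ S : ShortComplex (ModuleCat Γ), S.ShortExact →
    S.X₁ ∈ 𝒴 → S.X₃ ∈ 𝒴 → S.X₂ ∈ 𝒴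
  summand_closed : ∀ M N : ModuleCat Γ, (M ⊞ N) ∈ 𝒴 → M ∈ 𝒴
  coker_mono_closed : ∀ S : ShortComplex (ModuleCat Γ), S.ShortExact →
    S.X₁ ∈ 𝒴 → S.X₂ ∈ 𝒴 → S.X₃ ∈ 𝒴

/-- The right perpendicular category `𝒳^⊥ = ∩_{i ≥ 1} ker Ext^i(𝒳, −)`
inside the finitely generated modules. -/
def rightPerp (Γ : Type) [Ring Γ] (𝒳 : Set (ModuleCat Γ)) : Set (ModuleCat Γ) :=
  {M | M ∈ fgMod Γ ∧ ∀ X ∈ 𝒳, ∀ i : ℕ, 1 ≤ i → Subsingleton (extGrp Γ i X M)}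

/-- `f : C ⟶ M` is a right `𝒞`-approximation of `M`. -/
def IsRightApprox {𝒜 : Type*} [Category 𝒜] (𝒞 : Set 𝒜) {C M : 𝒜} (f : C ⟶ M) : Prop :=
  C ∈ 𝒞 ∧ ∀ C' ∈ 𝒞, ∀ g : C' ⟶ M, ∃ h : C' ⟶ C, h ≫ f = g

/-- A morphism `f : C ⟶ M` is right minimal if every endomorphism `φ` of `C` with
`φ ≫ f = f` is an automorphism. -/
def IsRightMinimal {𝒜 : Type*} [Category 𝒜] {C M : 𝒜} (f : C ⟶ M) : Prop :=
  ∀ φ : C ⟶ C, φ ≫ f = f → IsIso φ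

/-!
Choose `0 → Ω → F → Z → 0` with `F` projective and `Ω ∈ 𝒳`. Lifting `F → Z → C` to
`r : F → B`, the restriction of `r` to `Ω` lands in `A` and lifts along `f` to `Ω → X`; pushing
the presentation out along this lift gives `0 → X → Y → Z → 0` together with `g : Y → B`.

To lift `w : W → B` with `W ∈ 𝒳` along `g`, lift `W → C` along `h` to `t` and pull
`0 → X → Y → Z → 0` back along `t` to `0 → X → V → W → 0`, so `V ∈ 𝒳`. The difference of
`V → Y → B` and `V → W → B` is a map `e : V → A` extending `f`. Factoring `e` through `f` and
using minimality of `f` (Wakamatsu's argument) yields a retraction `ρ : V → X` with `ρ ≫ f = e`;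
then `V → Y` corrected by `ρ` vanishes on `X`, and the map `W → Y` it induces lifts `w`.
-/

namespace CategoryTheory.ShortComplex

variable {C : Type*} [Category C] [Abelian C]

-- Reducible, so that instances and lemmas about `pushout` and `pullback` see through them.
noncomputable abbrev pushoutAlong (T : ShortComplex C) {X : C} (k : T.X₁ ⟶ X) : ShortComplex C :=
  ShortComplex.mk (pushout.inr T.f k) (pushout.desc T.g 0 (by rw [T.zero, comp_zero]))
    (pushout.inr_desc _ _ _)

noncomputable abbrev pullbackAlong (T : ShortComplex C) {W : C} (t : W ⟶ T.X₃) : ShortComplex C :=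
  ShortComplex.mk (pullback.lift T.f 0 (by rw [T.zero, zero_comp])) (pullback.snd T.g t)
    (pullback.lift_snd _ _ _)

theorem ShortExact.pushoutAlong {T : ShortComplex C} (hT : T.ShortExact) {X : C}
    (k : T.X₁ ⟶ X) : (T.pushoutAlong k).ShortExact := by
  have := hT.mono_f
  have := hT.epi_g
  have hinl : pushout.inl T.f k ≫ (T.pushoutAlong k).g = T.g := pushout.inl_desc _ _ _
  refine .mk' ?_ (inferInstanceAs (Mono (pushout.inr T.f k))) (epi_of_epi_fac hinl)
  rw [exact_iff_exact_up_to_refinements]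
  intro A x hx
  obtain ⟨A', π, hπ, x₂, x₃, hx'⟩ :=
    (IsPushout.of_hasPushout T.f k).hom_eq_add_up_to_refinements x
  have hx₂ : x₂ ≫ T.g = 0 := by
    simpa [hx, pushout.inl_desc, pushout.inr_desc] using
      (hx' =≫ (T.pushoutAlong k).g).symm
  refine ⟨A', π, hπ, hT.exact.lift x₂ hx₂ ≫ k + x₃, ?_⟩
  simp [hx', ← pushout.condition]

theorem ShortExact.pullbackAlong {T : ShortComplex C} (hT : T.ShortExact) {W : C}
    (t : W ⟶ T.X₃) : (T.pullbackAlong t).ShortExact := by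
  have := hT.mono_f
  have := hT.epi_g
  refine .mk' ?_ (mono_of_mono_fac (pullback.lift_fst T.f 0 _))
    (inferInstanceAs (Epi (pullback.snd T.g t)))
  rw [exact_iff_exact_up_to_refinements]
  intro A x hx
  have hx₁ : (x ≫ pullback.fst T.g t) ≫ T.g = 0 := by
    simpa [pullback.condition] using hx =≫ t
  refine ⟨A, 𝟙 A, inferInstance, hT.exact.lift _ hx₁, ?_⟩
  apply pullback.hom_ext
  · rw [Category.id_comp, Category.assoc, pullback.lift_fst, hT.exact.lift_f]
  · rw [Category.id_comp, Category.assoc, pullback.lift_snd, comp_zero]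
    exact hx

end CategoryTheory.ShortComplex

theorem IsRightMinimal.exists_retraction {C : Type*} [Category C] {𝒳 : Set C} {X A V : C}
    {f : X ⟶ A} (hf : IsRightApprox 𝒳 f) (hmin : IsRightMinimal f) (hV : V ∈ 𝒳) (j : X ⟶ V)
    (e : V ⟶ A) (hje : j ≫ e = f) : ∃ ρ : V ⟶ X, j ≫ ρ = 𝟙 X ∧ ρ ≫ f = e := by
  obtain ⟨s, hs⟩ := hf.2 V hV e
  have hφ : (j ≫ s) ≫ f = f := by rw [Category.assoc, hs, hje]
  have := hmin _ hφ
  refine ⟨s ≫ inv (j ≫ s), by rw [← Category.assoc, IsIso.hom_inv_id], ?_⟩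
  rw [Category.assoc, (IsIso.inv_comp_eq _).2 hφ.symm, hs]

section Horseshoe

variable {C : Type*} [Category C] [Abelian C] {𝒳 : Set C}

theorem exists_shortExact_extending_of_projective {S T : ShortComplex C} (hS : S.ShortExact)
    (hT : T.ShortExact) [Projective T.X₂] (hT₁ : T.X₁ ∈ 𝒳) {X : C} {f : X ⟶ S.X₁}
    (hf : IsRightApprox 𝒳 f) (h : T.X₃ ⟶ S.X₃) :
    ∃ (Y : C) (u : X ⟶ Y) (v : Y ⟶ T.X₃) (g : Y ⟶ S.X₂) (huv : u ≫ v = 0),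
      (ShortComplex.mk u v huv).ShortExact ∧ u ≫ g = f ≫ S.f ∧ v ≫ h = g ≫ S.g := by
  have := hS.mono_f
  have := hS.epi_g
  let r := Projective.factorThru (T.g ≫ h) S.g
  have hr : r ≫ S.g = T.g ≫ h := Projective.factorThru_comp _ _
  obtain ⟨β, hβ⟩ := hf.2 _ hT₁ (hS.exact.lift (T.f ≫ r) (by simp [hr]))
  let g := pushout.desc r (f ≫ S.f) (by rw [← Category.assoc, hβ, hS.exact.lift_f])
  refine ⟨_, _, _, g, _, hT.pushoutAlong β, pushout.inr_desc _ _ _, ?_⟩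
  apply pushout.hom_ext
  · simp [g, hr, pushout.inl_desc_assoc]
  · simp [g, pushout.inr_desc_assoc]

theorem isRightApprox_τ₂_of_isRightMinimal_τ₁
    (hext : ∀ E : ShortComplex C, E.ShortExact → E.X₁ ∈ 𝒳 → E.X₃ ∈ 𝒳 → E.X₂ ∈ 𝒳)
    {S T : ShortComplex C} (hS : S.ShortExact) (hT : T.ShortExact) (φ : T ⟶ S)
    (hf : IsRightApprox 𝒳 φ.τ₁) (hmin : IsRightMinimal φ.τ₁) (hh : IsRightApprox 𝒳 φ.τ₃) :
    IsRightApprox 𝒳 φ.τ₂ := by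
  have := hS.mono_f
  refine ⟨hext T hT hf.1 hh.1, fun W hW w => ?_⟩
  obtain ⟨t, ht⟩ := hh.2 W hW (w ≫ S.g)
  let P := T.pullbackAlong t
  have hP := hT.pullbackAlong t
  have := hP.epi_g
  let d := pullback.fst T.g t ≫ φ.τ₂ - pullback.snd T.g t ≫ w
  have hd : d ≫ S.g = 0 := by
    rw [Preadditive.sub_comp, Category.assoc, Category.assoc, φ.comm₂₃, pullback.condition_assoc,
      ht, sub_self]
  let e := hS.exact.lift d hd
  have hje : P.f ≫ e = φ.τ₁ := by
    rw [← cancel_mono S.f, Category.assoc, hS.exact.lift_f]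
    simp [d, P, φ.comm₁₂, pullback.lift_fst_assoc, pullback.lift_snd_assoc]
  obtain ⟨ρ, hjρ, hρf⟩ := hmin.exists_retraction hf (hext P hP hf.1 hW) P.f e hje
  let m := pullback.fst T.g t - ρ ≫ T.f
  have hm : P.f ≫ m = 0 := by
    simp [m, P, reassoc_of% hjρ, pullback.lift_fst]
  refine ⟨hP.exact.desc m hm, ?_⟩
  rw [← cancel_epi P.g, hP.exact.g_desc_assoc]
  simp [m, ← φ.comm₁₂, reassoc_of% hρf, e, d, P]

end Horseshoe

section ModuleCat

universe v

variable {Γ : Type} [Ring Γ]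

theorem exists_projective_epi_of_mem_fgMod {M : ModuleCat.{v} Γ} (hM : M ∈ fgMod Γ) :
    ∃ (F : ModuleCat.{v} Γ) (q : F ⟶ M), F ∈ fgMod Γ ∧ Projective F ∧ Epi q := by
  have : Module.Finite Γ M := hM
  obtain ⟨n, q, hq⟩ := Module.Finite.exists_fin' Γ M
  let e : ULift.{v} (Fin n → Γ) ≃ₗ[Γ] Fin n → Γ := ULift.moduleEquiv
  refine ⟨ModuleCat.of Γ (ULift.{v} (Fin n → Γ)), ModuleCat.ofHom (q ∘ₗ e.toLinearMap),
    Module.Finite.equiv e.symm, ModuleCat.projective_of_free ((Pi.basisFun Γ (Fin n)).map e.symm),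
    (ModuleCat.epi_iff_surjective _).2 (hq.comp e.surjective)⟩

theorem IsResolving.exists_shortExact_projective {𝒳 : Set (ModuleCat.{v} Γ)}
    (h𝒳 : IsResolving Γ 𝒳) {M : ModuleCat.{v} Γ} (hM : M ∈ 𝒳) :
    ∃ (Ω F : ModuleCat.{v} Γ) (i : Ω ⟶ F) (q : F ⟶ M) (w : i ≫ q = 0),
      (ShortComplex.mk i q w).ShortExact ∧ Projective F ∧ Ω ∈ 𝒳 := by
  obtain ⟨F, q, hF, hFproj, hq⟩ := exists_projective_epi_of_mem_fgMod (h𝒳.subset_fg hM)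
  have hT : (ShortComplex.mk _ _ (kernel.condition q)).ShortExact :=
    .mk' (ShortComplex.exact_of_f_is_kernel _ (kernelIsKernel q)) inferInstance hq
  exact ⟨_, F, _, q, _, hT, hFproj, h𝒳.ker_epi_closed _ hT (h𝒳.proj_mem F hF hFproj) hM⟩

end ModuleCat

theorem horseshoe_for_right_approximations_general
    (Γ : Type) [Ring Γ]
    (𝒳 : Set (ModuleCat Γ)) (h𝒳 : IsResolving Γ 𝒳)
    (S : ShortComplex (ModuleCat Γ)) (hS : S.ShortExact)
    (X Z : ModuleCat Γ) (f : X ⟶ S.X₁) (h : Z ⟶ S.X₃)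
    (hf : IsRightApprox 𝒳 f) (hfmin : IsRightMinimal f)
    (hh : IsRightApprox 𝒳 h) :
    ∃ (Y : ModuleCat Γ) (u : X ⟶ Y) (v : Y ⟶ Z) (g : Y ⟶ S.X₂) (huv : u ≫ v = 0),
      (ShortComplex.mk u v huv).ShortExact ∧
      IsRightApprox 𝒳 g ∧
      u ≫ g = f ≫ S.f ∧
      v ≫ h = g ≫ S.g := by
  obtain ⟨Ω, F, i, q, w, hT, hF, hΩ⟩ := h𝒳.exists_shortExact_projective hh.1
  obtain ⟨Y, u, v, g, huv, hE, hu, hv⟩ :=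
    exists_shortExact_extending_of_projective hS hT hΩ hf h
  have hg := isRightApprox_τ₂_of_isRightMinimal_τ₁ h𝒳.ext_closed hS hE
    (ShortComplex.homMk f g h hu.symm hv.symm) hf hfmin hh
  exact ⟨Y, u, v, g, huv, hE, hg, hu, hv⟩

/-- generalized horseshoe lemma. Let `Γ` be an artin algebra,
`0 → A → B → C → 0` a short exact sequence of finitely generated `Γ`-modules, and `𝒳` a
resolving subcategory. If `f : X ⟶ A` and `h : Z ⟶ C` are right minimal
`𝒳`-approximations, then there is a right `𝒳`-approximation `g : Y ⟶ B` fitting into a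
commutative diagram with exact rows `0 → X → Y → Z → 0` over `0 → A → B → C → 0`. -/
theorem horseshoe_for_right_approximations
    (R : Type) [CommRing R] [IsArtinianRing R]
    (Γ : Type) [Ring Γ] [Algebra R Γ] [Module.Finite R Γ]
    (𝒳 : Set (ModuleCat Γ)) (h𝒳 : IsResolving Γ 𝒳)
    (S : ShortComplex (ModuleCat Γ)) (hS : S.ShortExact)
    (hfg₁ : S.X₁ ∈ fgMod Γ) (hfg₂ : S.X₂ ∈ fgMod Γ) (hfg₃ : S.X₃ ∈ fgMod Γ)
    (X Z : ModuleCat Γ) (f : X ⟶ S.X₁) (h : Z ⟶ S.X₃)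
    (hf : IsRightApprox 𝒳 f) (hfmin : IsRightMinimal f)
    (hh : IsRightApprox 𝒳 h) (hhmin : IsRightMinimal h) :
    ∃ (Y : ModuleCat Γ) (u : X ⟶ Y) (v : Y ⟶ Z) (g : Y ⟶ S.X₂) (huv : u ≫ v = 0),
      (ShortComplex.mk u v huv).ShortExact ∧
      IsRightApprox 𝒳 g ∧
      u ≫ g = f ≫ S.f ∧
      v ≫ h = g ≫ S.g :=
  horseshoe_for_right_approximations_general Γ 𝒳 h𝒳 S hS X Z f h hf hfmin hh
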